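/- In the simplicial setup, let Γ = {b₁ ≺ ⋯ ≺ b_t} be an equivalence class of B_A, h := (min{b_[k] : b ∈ Γ})_{k=1,…,d}, and Ĩ := (y^{(b₁−h)/α}, …, y^{(b_t−h)/α}) ⊂ T = K[y₁,…,y_d] the associated monomial ideal. If Ĩ is generated by monomials of degree 1 (that is, b_l − h ∈ {e₁,…,e_d} for every l), then for all 1 ≤ i < j ≤ t one has n(b_i, b_j) = m_{b_j}·y_k for some k, and hence deg n(b_i, b_j) ≤ r(K[B]) + 1. -/

import Mathlib

/-! Every element of `Γ` has the form `h + e_k`, so for `b_i ≺ b_j` the vector `b_i ∨ b_j − b_j`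
is a single `e_k` and `n(b_i, b_j) = m_{b_j}·m_{e_k}`. A monomial mapping to `t^{e_k}` has degree
one, and among the degree-one monomials `y_k` is grevlex-smallest with this image because the
`y`-variables come last; hence `m_{e_k} = y_k`. Finally `b_j ∈ B_A` gives `deg m_{b_j} ≤ r`. -/

namespace SimplicialToric

/-- `eVec d α i` is `α` times the `i`-th standard basis vector of `ℕ^d`. -/
def eVec (d α : ℕ) (i : Fin d) : Fin d → ℕ := fun j => if j = i then α else 0

/-- The Hilbert basis of a submonoid `B ⊆ ℕ^d`: the set of irreducible elements
(in `ℕ^d` the only unit is `0`). -/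
def Hilb {d : ℕ} (B : AddSubmonoid (Fin d → ℕ)) : Set (Fin d → ℕ) :=
  {b | b ∈ B ∧ b ≠ 0 ∧ ∀ x ∈ B, ∀ y ∈ B, b = x + y → x = 0 ∨ y = 0}

/-- The submonoid `A = Σᵢ ℤ≥0·eᵢ = αℤ≥0^d`. -/
def Amon (d α : ℕ) : AddSubmonoid (Fin d → ℕ) :=
  AddSubmonoid.closure (Set.range (eVec d α))

/-- `B_A = {x ∈ B : x − a ∉ B for every a ∈ A \ {0}}`. -/
def BA {d : ℕ} (B : AddSubmonoid (Fin d → ℕ)) (α : ℕ) : Set (Fin d → ℕ) :=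
  {x | x ∈ B ∧ ∀ z ∈ Amon d α, z ≠ 0 → ∀ y ∈ B, x ≠ y + z}

/-- The generators `a₁,…,a_c,e₁,…,e_d` of `B`, indexed by the variables of
`S = K[x₁,…,x_c,y₁,…,y_d]`; variable `Fin.castAdd d i` is `xᵢ`, variable
`Fin.natAdd c j` is `yⱼ`. -/
def gens (c d α : ℕ) (a : Fin c → Fin d → ℕ) : Fin (c + d) → Fin d → ℕ :=
  Fin.addCases a (eVec d α)

/-- The element of `B` represented by the monomial with exponent vector `σ`:
`π(x^μ y^ν) = t^(valE σ)`. -/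
def valE (c d α : ℕ) (a : Fin c → Fin d → ℕ) (σ : Fin (c + d) →₀ ℕ) : Fin d → ℕ :=
  ∑ v : Fin (c + d), σ v • gens c d α a v

/-- total degree of a monomial (exponent vector). -/
def degE {N : ℕ} (σ : Fin N →₀ ℕ) : ℕ := ∑ v, σ v

/-- the graded reverse lexicographic order: `grevlex σ τ` means `σ ≺ τ`,
i.e. `deg σ < deg τ`, or degrees agree and the last nonzero entry of `τ − σ`
is negative. -/
def grevlex {N : ℕ} (σ τ : Fin N →₀ ℕ) : Prop :=
  degE σ < degE τ ∨ (degE σ = degE τ ∧ ∃ k, τ k < σ k ∧ ∀ l, k < l → σ l = τ l)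

/-- `x ∼ y` iff `x − y ∈ gp(A) = αℤ^d`. -/
def Rel {d : ℕ} (α : ℕ) (x y : Fin d → ℕ) : Prop :=
  ∀ j, (α : ℤ) ∣ (x j : ℤ) - (y j : ℤ)

/-- `Γ` is an equivalence class of `B_A` modulo `αℤ^d`. -/
def IsClass {d : ℕ} (B : AddSubmonoid (Fin d → ℕ)) (α : ℕ) (Γ : Set (Fin d → ℕ)) : Prop :=
  ∃ x ∈ BA B α, Γ = {y | y ∈ BA B α ∧ Rel α x y}

/-- the total order on an equivalence class of `B_A`: `b ≺ c` iff the last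
nonzero entry of `b − c` is negative. -/
def ltCls {d : ℕ} (x y : Fin d → ℕ) : Prop :=
  ∃ k, x k < y k ∧ ∀ l, k < l → x l = y l

/-- `joinSub x y = x∨y − y`, where `x∨y` is the componentwise maximum. -/
def joinSub {d : ℕ} (x y : Fin d → ℕ) : Fin d → ℕ := fun j => max (x j) (y j) - y j

/-- the monomial with exponents `σ` lies in `T = K[y₁,…,y_d]`. -/
def yOnly (c d : ℕ) (σ : Fin (c + d) →₀ ℕ) : Prop := ∀ i : Fin c, σ (Fin.castAdd d i) = 0

/-- the monomial with exponents `σ` involves only the `x`-variables. -/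
def xOnly (c d : ℕ) (σ : Fin (c + d) →₀ ℕ) : Prop := ∀ j : Fin d, σ (Fin.natAdd c j) = 0

/-- the set `N₁`, for a given choice `m` of the minimal monomials `m_b`. -/
def N1set (c d α : ℕ) (a : Fin c → Fin d → ℕ) (B : AddSubmonoid (Fin d → ℕ))
    (m : (Fin d → ℕ) → (Fin (c + d) →₀ ℕ)) : Set (Fin (c + d) →₀ ℕ) :=
  {n | ∃ (i : Fin c) (b : Fin d → ℕ), b ∈ BA B α ∧
    n = Finsupp.single (Fin.castAdd d i) 1 + m b ∧ n ≠ m (a i + b)}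

/-- the set `N₂ = ∪_Γ N_Γ`, where `N_Γ = {n(bᵢ,bⱼ) = m_{bⱼ}·m_{bᵢ∨bⱼ−bⱼ} : bᵢ ≺ bⱼ in Γ}`. -/
def N2set {d : ℕ} (c α : ℕ) (B : AddSubmonoid (Fin d → ℕ))
    (m : (Fin d → ℕ) → (Fin (c + d) →₀ ℕ)) : Set (Fin (c + d) →₀ ℕ) :=
  {n | ∃ Γ, IsClass B α Γ ∧ ∃ bi ∈ Γ, ∃ bj ∈ Γ, ltCls bi bj ∧ n = m bj + m (joinSub bi bj)}

/-- `σ` is the exponent vector of the initial (i.e. `≺`-largest) term of `f`. -/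
def IsLeadMon {N : ℕ} {K : Type*} [Field K] (f : MvPolynomial (Fin N) K)
    (σ : Fin N →₀ ℕ) : Prop :=
  σ ∈ f.support ∧ ∀ τ ∈ f.support, τ = σ ∨ grevlex τ σ

/-- the initial ideal of `I` with respect to the graded reverse lexicographic order. -/
noncomputable def initialIdeal {N : ℕ} {K : Type*} [Field K] (I : Ideal (MvPolynomial (Fin N) K)) :
    Ideal (MvPolynomial (Fin N) K) :=
  Ideal.span {g | ∃ f ∈ I, ∃ σ, IsLeadMon f σ ∧ g = MvPolynomial.monomial σ (1 : K)}

end SimplicialToric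

open SimplicialToric

namespace SimplicialToric

lemma degE_eq_degree {N : ℕ} (σ : Fin N →₀ ℕ) : degE σ = σ.degree :=
  (Finsupp.degree_eq_sum σ).symm

lemma degE_add {N : ℕ} (σ τ : Fin N →₀ ℕ) : degE (σ + τ) = degE σ + degE τ := by
  simp only [degE_eq_degree, map_add]

lemma degE_eq_one_iff {N : ℕ} {σ : Fin N →₀ ℕ} :
    degE σ = 1 ↔ ∃ v, σ = Finsupp.single v 1 := by
  rw [degE_eq_degree]
  simpa [eq_comm] using (Set.ext_iff.mp Finsupp.range_single_one σ).symm

lemma grevlex_single_single_iff {N : ℕ} {v w : Fin N} :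
    grevlex (Finsupp.single v 1) (Finsupp.single w 1) ↔ w < v := by
  simp only [grevlex, degE_eq_degree, Finsupp.degree_single, lt_irrefl, false_or, true_and,
    Finsupp.single_apply]
  constructor
  · rintro ⟨k, hk, htail⟩
    obtain ⟨rfl, hwk⟩ : v = k ∧ w ≠ v := by
      by_cases hvk : v = k <;> by_cases hwk : w = k <;> simp_all
    by_contra! hvw
    simpa [hwk, Ne.symm hwk] using htail w (lt_of_le_of_ne hvw (Ne.symm hwk))
  · intro hwv
    refine ⟨v, by simp [hwv.ne], fun l hl => ?_⟩
    simp [hl.ne, (hwv.trans hl).ne]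

lemma eVec_injective {d α : ℕ} (hα : α ≠ 0) : Function.Injective (eVec d α) := by
  intro i j hij
  simpa [eVec, hα] using congrFun hij i

lemma sum_eVec (d α : ℕ) (k : Fin d) : ∑ j, eVec d α k j = α := by
  simp [eVec]

lemma ltCls_irrefl {d : ℕ} (x : Fin d → ℕ) : ¬ ltCls x x :=
  fun ⟨_, hk, _⟩ => lt_irrefl _ hk

lemma joinSub_add_eVec {d α : ℕ} (h : Fin d → ℕ) {i j : Fin d} (hij : i ≠ j) :
    joinSub (fun l => h l + eVec d α i l) (fun l => h l + eVec d α j l) = eVec d α i := by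
  funext l
  simp only [joinSub, eVec]
  split_ifs <;> omega

section Valuation

variable {c d α : ℕ} {a : Fin c → Fin d → ℕ}

lemma valE_single (v : Fin (c + d)) :
    valE c d α a (Finsupp.single v 1) = gens c d α a v := by
  rw [valE, Finset.sum_eq_single v (fun w _ hw => by simp [Ne.symm hw]) (by simp)]
  simp

lemma valE_single_natAdd (k : Fin d) :
    valE c d α a (Finsupp.single (Fin.natAdd c k) 1) = eVec d α k := by
  simp [valE_single, gens]

lemma sum_valE (hdeg : ∀ i, ∑ j, a i j = α) (σ : Fin (c + d) →₀ ℕ) :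
    ∑ j, valE c d α a σ j = α * degE σ := by
  have hgens : ∀ v, ∑ j, gens c d α a v j = α := by
    intro v
    induction v using Fin.addCases with
    | left i => simpa [gens] using hdeg i
    | right k => simpa [gens] using sum_eVec d α k
  simp only [valE, degE, Finset.sum_apply, Pi.smul_apply, smul_eq_mul]
  rw [Finset.sum_comm, Finset.mul_sum]
  exact Finset.sum_congr rfl fun v _ => by rw [← Finset.mul_sum, hgens, mul_comm]

lemma eq_single_of_valE_eq_eVec (hα : 0 < α) (hdeg : ∀ i, ∑ j, a i j = α) {k : Fin d}
    {μ : Fin (c + d) →₀ ℕ} (hval : valE c d α a μ = eVec d α k)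
    (hmin : μ = Finsupp.single (Fin.natAdd c k) 1 ∨
      grevlex μ (Finsupp.single (Fin.natAdd c k) 1)) :
    μ = Finsupp.single (Fin.natAdd c k) 1 := by
  have hμdeg : degE μ = 1 := by
    have hsum := sum_valE hdeg μ
    rw [hval, sum_eVec] at hsum
    exact (Nat.eq_of_mul_eq_mul_left hα (by rw [← hsum, mul_one])).symm
  obtain ⟨v, rfl⟩ := degE_eq_one_iff.mp hμdeg
  refine hmin.resolve_right fun hlt => ?_
  rw [grevlex_single_single_iff] at hlt
  induction v using Fin.addCases with
  | left i => exact absurd hlt (by simp [Fin.lt_def]; omega)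
  | right j =>
    obtain rfl : j = k := eVec_injective hα.ne' (by rwa [valE_single_natAdd] at hval)
    exact lt_irrefl _ hlt

end Valuation

end SimplicialToric

theorem nmon_eq_mbj_mul_yk_of_deg_one_generated_general
    (c d α : ℕ) (hα : 0 < α)
    (a : Fin c → Fin d → ℕ) (B : AddSubmonoid (Fin d → ℕ))
    (hBgen : B = AddSubmonoid.closure (Set.range a ∪ Set.range (eVec d α)))
    (hdeg : ∀ i, ∑ j, a i j = α)
    (m : (Fin d → ℕ) → (Fin (c + d) →₀ ℕ))
    (hmval : ∀ b ∈ B, valE c d α a (m b) = b)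
    (hmmin : ∀ b ∈ B, ∀ σ, valE c d α a σ = b → m b = σ ∨ grevlex (m b) σ)
    (r : ℕ) (hr : IsGreatest {k | ∃ b ∈ BA B α, ∑ j, b j = α * k} r)
    (Γ : Set (Fin d → ℕ)) (hΓ : IsClass B α Γ)
    (h : Fin d → ℕ)
    (hdeg1 : ∀ b ∈ Γ, ∃ k : Fin d, b = fun j => h j + eVec d α k j) :
    ∀ bi ∈ Γ, ∀ bj ∈ Γ, ltCls bi bj →
      (∃ k : Fin d, m bj + m (joinSub bi bj)
          = m bj + Finsupp.single (Fin.natAdd c k) 1) ∧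
      degE (m bj + m (joinSub bi bj)) ≤ r + 1 := by
  intro bi hbi bj hbj hlt
  have hbjBA : bj ∈ BA B α := by
    obtain ⟨x, -, rfl⟩ := hΓ
    exact hbj.1
  have hbj_le : degE (m bj) ≤ r :=
    hr.2 ⟨bj, hbjBA, by rw [← sum_valE hdeg, hmval bj hbjBA.1]⟩
  obtain ⟨ki, rfl⟩ := hdeg1 bi hbi
  obtain ⟨kj, rfl⟩ := hdeg1 bj hbj
  have hne : ki ≠ kj := by
    rintro rfl
    exact ltCls_irrefl _ hlt
  have heB : eVec d α ki ∈ B :=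
    hBgen ▸ AddSubmonoid.subset_closure (Or.inr ⟨ki, rfl⟩)
  have hm : m (eVec d α ki) = Finsupp.single (Fin.natAdd c ki) 1 :=
    eq_single_of_valE_eq_eVec hα hdeg (hmval _ heB) (hmmin _ heB _ (valE_single_natAdd ki))
  rw [joinSub_add_eVec h hne, hm, degE_add, degE_eq_degree (Finsupp.single _ _),
    Finsupp.degree_single]
  exact ⟨⟨ki, rfl⟩, Nat.add_le_add_right hbj_le 1⟩

/-- If the monomial ideal associated with an equivalence class `Γ` of
`B_A` is generated in degree 1, then every `n(bᵢ,bⱼ)` (`bᵢ ≺ bⱼ` in `Γ`) equals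
`m_{bⱼ}·y_k` for some `k` and has degree at most `r(K[B]) + 1`. -/
theorem nmon_eq_mbj_mul_yk_of_deg_one_generated
    (c d α : ℕ) (hα : 0 < α)
    (a : Fin c → Fin d → ℕ) (B : AddSubmonoid (Fin d → ℕ))
    (hBgen : B = AddSubmonoid.closure (Set.range a ∪ Set.range (eVec d α)))
    (hhilb : Hilb B = Set.range a ∪ Set.range (eVec d α))
    (hdeg : ∀ i, ∑ j, a i j = α)
    (m : (Fin d → ℕ) → (Fin (c + d) →₀ ℕ))
    (hmval : ∀ b ∈ B, valE c d α a (m b) = b)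
    (hmmin : ∀ b ∈ B, ∀ σ, valE c d α a σ = b → m b = σ ∨ grevlex (m b) σ)
    (r : ℕ) (hr : IsGreatest {k | ∃ b ∈ BA B α, ∑ j, b j = α * k} r)
    (Γ : Set (Fin d → ℕ)) (hΓ : IsClass B α Γ)
    (h : Fin d → ℕ) (hh : ∀ j, IsLeast {v | ∃ b ∈ Γ, v = b j} (h j))
    (hdeg1 : ∀ b ∈ Γ, ∃ k : Fin d, b = fun j => h j + eVec d α k j) :
    ∀ bi ∈ Γ, ∀ bj ∈ Γ, ltCls bi bj →
      (∃ k : Fin d, m bj + m (joinSub bi bj)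
          = m bj + Finsupp.single (Fin.natAdd c k) 1) ∧
      degE (m bj + m (joinSub bi bj)) ≤ r + 1 :=
  nmon_eq_mbj_mul_yk_of_deg_one_generated_general c d α hα a B hBgen hdeg m hmval hmmin r hr Γ hΓ h
    hdeg1
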